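/- arXiv:2101.08187 — 2 statements merged into one kernel-verified Lean document; each statement's English description precedes it below -/
import Mathlib

section
/- Let (R, m) be a commutative Noetherian local ring and let 0 → M₁ → M → M₂ → 0 be a short exact sequence of finitely generated R-modules such that M ≅ M₁ ⊕ M₂ as R-modules. Then the sequence splits. -/
/-!
Modulo `𝔪 ^ n` all modules involved have finite length. There, comparing lengths in
`M / 𝔪 ^ n M ≅ M₁ / 𝔪 ^ n M₁ × M₂ / 𝔪 ^ n M₂` shows that the reduced sequence is short exact and
stays right exact after applying `Hom(M₂, -)`, so the projection `M₂ → M₂ / 𝔪 ^ n M₂` lifts to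
`M / 𝔪 ^ n M`. By the Artin–Rees lemma, such lifts for large `n` come from maps `s : M₂ → M`, and
then `g ∘ s - id ∈ 𝔪 ^ k End(M₂)` for every `k`. Hence `id` lies in the `𝔪`-adic closure of the
image of `Hom(M₂, M) → End(M₂)`, which is closed by Krull's intersection theorem.
-/

open Function LinearMap Submodule

section FiniteLength

variable {R : Type*} [Ring R] {A B C : Type*} [AddCommGroup A] [Module R A]
  [AddCommGroup B] [Module R B] [AddCommGroup C] [Module R C] {f : A →ₗ[R] B} {g : B →ₗ[R] C}

lemma Module.length_eq_length_ker_add_length_range (f : A →ₗ[R] B) :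
    Module.length R A = Module.length R (ker f) + Module.length R (range f) := by
  have h := Module.length_eq_add_of_exact (ker f.rangeRestrict).subtype f.rangeRestrict
    (subtype_injective _) f.surjective_rangeRestrict (exact_subtype_ker_map _)
  rwa [ker_rangeRestrict] at h

lemma ENat.eq_zero_of_add_eq_self {a b : ℕ∞} (hb : b ≠ ⊤) (h : a + b = b) : a = 0 :=
  WithTop.add_right_cancel hb (h.trans (zero_add b).symm)

lemma Function.Exact.injective_of_linearEquiv_prod (hfg : Exact f g) (hg : Surjective g)
    (e : B ≃ₗ[R] A × C) (hB : Module.length R B ≠ ⊤) : Injective f := by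
  have hB₁ : Module.length R B = Module.length R (range f) + Module.length R C :=
    Module.length_eq_add_of_exact (range f).subtype g (subtype_injective _) hg
      (exact_iff.2 (by rw [range_subtype, hfg.linearMap_ker_eq]))
  have hB₂ : Module.length R B = Module.length R A + Module.length R C := by
    rw [e.length_eq, Module.length_prod]
  have hker : Module.length R (ker f) = 0 := by
    refine ENat.eq_zero_of_add_eq_self (hB₁ ▸ hB) ?_
    rw [← add_assoc, ← Module.length_eq_length_ker_add_length_range, ← hB₁, hB₂]
  have := Module.length_eq_zero_iff.1 hker
  exact ker_eq_bot.1 (eq_bot_of_subsingleton)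

lemma Function.Exact.surjective_of_linearEquiv_prod (hfg : Exact f g) (hf : Injective f)
    (e : B ≃ₗ[R] A × C) (hB : Module.length R B ≠ ⊤) : Surjective g := by
  have hB₁ : Module.length R B = Module.length R A + Module.length R (range g) :=
    Module.length_eq_add_of_exact f g.rangeRestrict hf g.surjective_rangeRestrict
      (exact_iff.2 (by rw [ker_rangeRestrict, hfg.linearMap_ker_eq]))
  have hB₂ : Module.length R B = Module.length R A + Module.length R C := by
    rw [e.length_eq, Module.length_prod]
  have hC : Module.length R C = Module.length R (range g) + Module.length R (C ⧸ range g) :=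
    Module.length_eq_add_of_exact _ _ (subtype_injective _) (mkQ_surjective _)
      (exact_iff.2 (by rw [ker_mkQ, range_subtype]))
  have hcoker : Module.length R (C ⧸ range g) = 0 := by
    have hA : Module.length R A ≠ ⊤ := fun h ↦ hB (by rw [hB₂, h, top_add])
    refine ENat.eq_zero_of_add_eq_self (b := Module.length R (range g)) ?_ ?_
    · exact fun h ↦ hB (by rw [hB₁, h, add_top])
    · rw [add_comm, ← hC]
      exact WithTop.add_left_cancel hA (hB₂.symm.trans hB₁)
  have := Module.length_eq_zero_iff.1 hcoker
  exact range_eq_top.1 (Submodule.Quotient.subsingleton_iff.1 this)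

end FiniteLength

section HomFiniteLength

variable {R : Type*} [CommRing R] {A B C X Y : Type*} [AddCommGroup A] [Module R A]
  [AddCommGroup B] [Module R B] [AddCommGroup C] [Module R C] {f : A →ₗ[R] B} {g : B →ₗ[R] C}
  [AddCommGroup X] [Module R X] [AddCommGroup Y] [Module R Y]

lemma Function.Exact.compRight (hfg : Exact f g) (hf : Injective f) :
    Exact (f.compRight R (M := X)) (g.compRight R) := by
  refine exact_iff.2 (le_antisymm (fun φ hφ ↦ ?_) ?_)
  · have hmem : ∀ x, φ x ∈ range f := fun x ↦
      hfg.linearMap_ker_eq ▸ LinearMap.congr_fun (mem_ker.1 hφ) x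
    refine ⟨(LinearEquiv.ofInjective f hf).symm ∘ₗ φ.codRestrict _ hmem, ?_⟩
    ext x
    exact congrArg Subtype.val ((LinearEquiv.ofInjective f hf).apply_symm_apply ⟨φ x, hmem x⟩)
  · rintro _ ⟨ψ, rfl⟩
    exact mem_ker.2 (by ext x; exact hfg.apply_apply_eq_zero (ψ x))

lemma LinearMap.injective_pi_apply {a : ℕ} {v : Fin a → X} (hv : span R (Set.range v) = ⊤) :
    Injective (LinearMap.pi fun i ↦ applyₗ (R := R) (M₂ := Y) (v i)) := fun _ _ h ↦
  ext_on_range hv (congrFun h)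

lemma Module.length_linearMap_ne_top [Module.Finite R X] (hY : Module.length R Y ≠ ⊤) :
    Module.length R (X →ₗ[R] Y) ≠ ⊤ := by
  obtain ⟨a, v, hv⟩ := Module.Finite.exists_fin (R := R) (M := X)
  refine ne_top_of_le_ne_top ?_ (Module.length_le_of_injective _ (injective_pi_apply (Y := Y) hv))
  rw [Module.length_pi_of_fintype]
  exact WithTop.sum_ne_top.2 fun _ _ ↦ hY

lemma Function.Injective.compRight (hf : Injective f) : Injective (f.compRight R (M := X)) :=
  fun _ _ h ↦ ext fun x ↦ hf (LinearMap.congr_fun h x)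

theorem Function.Exact.exists_comp_eq_of_linearEquiv_prod [Module.Finite R X] (hfg : Exact f g)
    (hg : Surjective g) (e : B ≃ₗ[R] A × C) (hB : Module.length R B ≠ ⊤) (h : X →ₗ[R] C) :
    ∃ t : X →ₗ[R] B, g ∘ₗ t = h := by
  have hf := hfg.injective_of_linearEquiv_prod hg e hB
  exact (hfg.compRight hf).surjective_of_linearEquiv_prod hf.compRight
    (e.congrRight.trans (LinearMap.prodEquiv R).symm) (Module.length_linearMap_ne_top hB) h

end HomFiniteLength

section Reduction

variable {R : Type*} [CommRing R] (I : Ideal R) {M N P : Type*} [AddCommGroup M] [Module R M]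
  [AddCommGroup N] [Module R N] [AddCommGroup P] [Module R P]

lemma Submodule.smul_top_prod :
    (I • ⊤ : Submodule R (M × N)) = (I • ⊤ : Submodule R M).prod (I • ⊤ : Submodule R N) := by
  refine le_antisymm
    (smul_le.2 fun r hr x _ ↦ ⟨smul_mem_smul hr mem_top, smul_mem_smul hr mem_top⟩) ?_
  rintro ⟨x, y⟩ ⟨hx, hy⟩
  rw [← Prod.fst_add_snd (x, y)]
  exact add_mem (smul_top_le_comap_smul_top I (inl R M N) hx)
    (smul_top_le_comap_smul_top I (inr R M N) hy)

noncomputable def Submodule.quotSMulTopProdEquiv :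
    ((M × N) ⧸ (I • ⊤ : Submodule R (M × N))) ≃ₗ[R]
      (M ⧸ (I • ⊤ : Submodule R M)) × (N ⧸ (I • ⊤ : Submodule R N)) :=
  let π := (mkQ (I • ⊤ : Submodule R M)).prodMap (mkQ (I • ⊤ : Submodule R N))
  have hker : (I • ⊤ : Submodule R (M × N)) = ker π := by
    rw [smul_top_prod, ker_prodMap, ker_mkQ, ker_mkQ]
  (quotEquivOfEq _ _ hker).trans
    (π.quotKerEquivOfSurjective ((mkQ_surjective _).prodMap (mkQ_surjective _)))

noncomputable def LinearEquiv.quotSMulTop (e : M ≃ₗ[R] N) :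
    (M ⧸ (I • ⊤ : Submodule R M)) ≃ₗ[R] N ⧸ (I • ⊤ : Submodule R N) :=
  Quotient.equiv _ _ e (by rw [map_smul'', Submodule.map_top, LinearEquiv.range])

variable {I} {f : M →ₗ[R] N} {g : N →ₗ[R] P}

lemma Submodule.mapQ_smul_top_surjective (hg : Surjective g) :
    Surjective (mapQ _ _ g (smul_top_le_comap_smul_top I g)) := by
  rw [← range_eq_top, range_mapQ, range_eq_top.2 hg, Submodule.map_top, range_mkQ]

lemma Function.Exact.mapQ_smul_top (hfg : Exact f g) (hg : Surjective g) :
    Exact (mapQ _ _ f (smul_top_le_comap_smul_top I f))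
      (mapQ _ _ g (smul_top_le_comap_smul_top I g)) := by
  rw [hfg.exact_mapQ_iff, map_smul'', Submodule.map_top, range_eq_top.2 hg]
  exact inf_le_right

end Reduction

section Local

variable {R : Type*} [CommRing R]

lemma Module.length_quotient_smul_top_ne_top (I : Ideal R) [IsArtinianRing (R ⧸ I)] (M : Type*)
    [AddCommGroup M] [Module R M] [Module.Finite R M] :
    Module.length R (M ⧸ (I • ⊤ : Submodule R M)) ≠ ⊤ := by
  rw [Module.length_eq_of_surjective (R := R ⧸ I) (S := R) Ideal.Quotient.mk_surjective]
  exact Module.length_ne_top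

variable [IsNoetherianRing R] [IsLocalRing R]

instance IsLocalRing.isArtinianRing_quotient_maximalIdeal_pow (n : ℕ) :
    IsArtinianRing (R ⧸ maximalIdeal R ^ n) := by
  have : Ring.KrullDimLE 0 (R ⧸ maximalIdeal R ^ n) := by
    refine Ideal.krullDimLE_zero_quotient_iff_forall_minimalPrimes_isMaximal.2 fun J hJ ↦ ?_
    have := hJ.1.1
    exact (maximalIdeal.isMaximal R).eq_of_le this.ne_top (this.le_of_pow_le hJ.1.2) ▸
      maximalIdeal.isMaximal R
  exact IsNoetherianRing.isArtinianRing_of_krullDimLE_zero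

end Local

section ArtinRees

variable {R : Type*} [CommRing R] (I : Ideal R) {M N X Y : Type*} [AddCommGroup M] [Module R M]
  [AddCommGroup N] [Module R N] [AddCommGroup X] [Module R X] [AddCommGroup Y] [Module R Y]

lemma Submodule.pi_mem_smul_top {ι : Type*} [Fintype ι] [DecidableEq ι] {x : ι → M}
    (hx : ∀ i, x i ∈ (I • ⊤ : Submodule R M)) : x ∈ (I • ⊤ : Submodule R (ι → M)) := by
  rw [← Finset.univ_sum_single x]
  exact sum_mem fun i _ ↦ smul_top_le_comap_smul_top I (LinearMap.single R (fun _ ↦ M) i) (hx i)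

lemma LinearMap.exists_comp_eq_of_ker_le {p : M →ₗ[R] N} (hp : Surjective p) {z : M →ₗ[R] Y}
    (h : ker p ≤ ker z) : ∃ s : N →ₗ[R] Y, s ∘ₗ p = z :=
  ⟨(ker p).liftQ z h ∘ₗ (p.quotKerEquivOfSurjective hp).symm.toLinearMap, by
    ext x
    simp⟩

variable [IsNoetherianRing R]

lemma Ideal.exists_comap_pow_smul_top_le_sup_ker [Module.Finite R N] (D : M →ₗ[R] N) :
    ∃ c, ∀ n, Submodule.comap D (I ^ (n + c) • ⊤) ≤ I ^ n • ⊤ ⊔ ker D := by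
  obtain ⟨c, hc⟩ := I.exists_pow_inf_eq_pow_smul (range D)
  refine ⟨c, fun n x hx ↦ ?_⟩
  have hDx : D x ∈ Submodule.map D (I ^ n • ⊤) := by
    have hmem : D x ∈ (I ^ (n + c) • ⊤ : Submodule R N) ⊓ range D := ⟨hx, mem_range_self D x⟩
    rw [hc (n + c) (c.le_add_left n), Nat.add_sub_cancel] at hmem
    rw [map_smul'', Submodule.map_top]
    exact (smul_mono_right _ inf_le_right : _ ≤ I ^ n • range D) hmem
  obtain ⟨y, hy, hyx⟩ := hDx
  exact mem_sup.2 ⟨y, hy, x - y, by rw [mem_ker, map_sub, hyx, sub_self], add_sub_cancel y x⟩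

lemma Ideal.exists_mem_pow_smul_top_of_forall_apply_mem [Module.Finite R X] [Module.Finite R Y] :
    ∃ c, ∀ n (φ : X →ₗ[R] Y), (∀ x, φ x ∈ (I ^ (n + c) • ⊤ : Submodule R Y)) →
      φ ∈ (I ^ n • ⊤ : Submodule R (X →ₗ[R] Y)) := by
  classical
  obtain ⟨a, v, hv⟩ := Module.Finite.exists_fin (R := R) (M := X)
  let ev := LinearMap.pi fun i ↦ applyₗ (R := R) (M₂ := Y) (v i)
  obtain ⟨c, hc⟩ := I.exists_comap_pow_smul_top_le_sup_ker ev
  refine ⟨c, fun n φ hφ ↦ ?_⟩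
  have hker : ker ev = ⊥ := ker_eq_bot.2 (injective_pi_apply hv)
  simpa only [hker, sup_bot_eq] using hc n (pi_mem_smul_top _ fun i ↦ hφ (v i))

lemma Ideal.exists_comp_mkQ_eq_factorPow_comp [Module.Finite R X] [Module.Finite R M] :
    ∃ c, ∀ n (t : X →ₗ[R] M ⧸ (I ^ (n + c) • ⊤ : Submodule R M)), ∃ s : X →ₗ[R] M,
      (I ^ n • ⊤ : Submodule R M).mkQ ∘ₗ s = factorPow I M (n.le_add_right c) ∘ₗ t := by
  -- Lift `t ∘ p` along a free presentation `p`; by Artin–Rees the lift can be corrected by an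
  -- element of `I ^ n • Hom(R^a, M)` to one that kills `ker p`, hence factors through `p`.
  obtain ⟨a, p, hp⟩ := Module.Finite.exists_fin' R X
  let restrict := LinearMap.lcomp R M (ker p).subtype
  obtain ⟨c₁, hc₁⟩ := I.exists_mem_pow_smul_top_of_forall_apply_mem (X := ker p) (Y := M)
  obtain ⟨c₂, hc₂⟩ := I.exists_comap_pow_smul_top_le_sup_ker restrict
  refine ⟨c₂ + c₁, fun n t ↦ ?_⟩
  obtain ⟨u, hu⟩ := Module.projective_lifting_property (mkQ _) (t ∘ₗ p) (mkQ_surjective _)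
  have hres : restrict u ∈ (I ^ (n + c₂) • ⊤ : Submodule R (ker p →ₗ[R] M)) := by
    refine hc₁ _ _ fun k ↦ ?_
    have := LinearMap.congr_fun hu k
    simp only [coe_comp, comp_apply, mkQ_apply, mem_ker.1 k.2, map_zero,
      Quotient.mk_eq_zero] at this
    rwa [← add_assoc] at this
  obtain ⟨u', hu', z, hz, rfl⟩ := mem_sup.1 (hc₂ n hres)
  obtain ⟨s, rfl⟩ := exists_comp_eq_of_ker_le hp (z := z) fun k hk ↦
    LinearMap.congr_fun (mem_ker.1 hz) ⟨k, hk⟩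
  refine ⟨s, (cancel_right hp).1 (LinearMap.ext fun y ↦ ?_)⟩
  have hu'y : u' y ∈ (I ^ n • ⊤ : Submodule R M) := smul_top_le_comap_smul_top _ (applyₗ y) hu'
  calc (I ^ n • ⊤ : Submodule R M).mkQ (s (p y))
      = (I ^ n • ⊤ : Submodule R M).mkQ (u' y + s (p y)) := by
        rw [map_add, mkQ_apply _ (u' y), (Quotient.mk_eq_zero _).2 hu'y, zero_add]
    _ = factorPow I M (n.le_add_right _) (mkQ _ (u' y + s (p y))) := (factor_mk _ _).symm
    _ = factorPow I M (n.le_add_right _) (t (p y)) := congrArg _ (LinearMap.congr_fun hu y)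

end ArtinRees

lemma Submodule.mem_of_forall_mem_sup_pow_smul_top {R M : Type*} [CommRing R] [IsNoetherianRing R]
    [AddCommGroup M] [Module R M] [Module.Finite R M] {I : Ideal R} (hI : I ≤ Ideal.jacobson ⊥)
    (N : Submodule R M) {x : M} (hx : ∀ n, x ∈ N ⊔ I ^ n • ⊤) : x ∈ N := by
  have hx' : N.mkQ x ∈ (⨅ n, I ^ n • ⊤ : Submodule R (M ⧸ N)) := mem_iInf _ |>.2 fun n ↦ by
    obtain ⟨y, hy, z, hz, rfl⟩ := mem_sup.1 (hx n)
    rw [map_add, mkQ_apply _ y, (Quotient.mk_eq_zero _).2 hy, zero_add]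
    exact smul_top_le_comap_smul_top _ N.mkQ hz
  rwa [I.iInf_pow_smul_eq_bot_of_le_jacobson hI, mem_bot, mkQ_apply, Quotient.mk_eq_zero] at hx'

section Splitting

variable {R : Type*} [CommRing R] {M₁ M M₂ : Type*} [AddCommGroup M₁] [Module R M₁]
  [AddCommGroup M] [Module R M] [AddCommGroup M₂] [Module R M₂] [Module.Finite R M]
  [Module.Finite R M₂] {f : M₁ →ₗ[R] M} {g : M →ₗ[R] M₂}

lemma Function.Exact.exists_lift_mkQ_smul_top (I : Ideal R) [IsArtinianRing (R ⧸ I)]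
    (hfg : Exact f g) (hg : Surjective g) (e : M ≃ₗ[R] M₁ × M₂) :
    ∃ t : M₂ →ₗ[R] M ⧸ (I • ⊤ : Submodule R M),
      mapQ _ _ g (smul_top_le_comap_smul_top I g) ∘ₗ t = mkQ _ :=
  (hfg.mapQ_smul_top hg).exists_comp_eq_of_linearEquiv_prod (mapQ_smul_top_surjective hg)
    ((e.quotSMulTop I).trans (quotSMulTopProdEquiv I)) (Module.length_quotient_smul_top_ne_top I M)
    (mkQ _)

variable [IsNoetherianRing R] [IsLocalRing R]

open IsLocalRing in
lemma Function.Exact.exists_comp_sub_id_mem_maximalIdeal_pow_smul_top (hfg : Exact f g)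
    (hg : Surjective g) (e : M ≃ₗ[R] M₁ × M₂) (n : ℕ) :
    ∃ s : M₂ →ₗ[R] M, g ∘ₗ s - LinearMap.id ∈
      (maximalIdeal R ^ n • ⊤ : Submodule R (M₂ →ₗ[R] M₂)) := by
  set m := maximalIdeal R
  obtain ⟨c₁, hc₁⟩ := m.exists_comp_mkQ_eq_factorPow_comp (X := M₂) (M := M)
  obtain ⟨c₂, hc₂⟩ := m.exists_mem_pow_smul_top_of_forall_apply_mem (X := M₂) (Y := M₂)
  obtain ⟨t, ht⟩ := hfg.exists_lift_mkQ_smul_top (m ^ (n + c₂ + c₁)) hg e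
  obtain ⟨s, hs⟩ := hc₁ (n + c₂) t
  refine ⟨s, hc₂ n _ fun x ↦ ?_⟩
  have hcomm : ∀ y, mapQ _ _ g (smul_top_le_comap_smul_top _ g)
      (factorPow m M ((n + c₂).le_add_right c₁) y) = factorPow m M₂ ((n + c₂).le_add_right c₁)
        (mapQ _ _ g (smul_top_le_comap_smul_top _ g) y) :=
    fun y ↦ Quotient.inductionOn' y fun _ ↦ rfl
  rw [LinearMap.sub_apply, LinearMap.comp_apply, LinearMap.id_apply, ← Submodule.Quotient.eq]
  calc Submodule.Quotient.mk (g (s x))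
      = mapQ _ _ g (smul_top_le_comap_smul_top _ g) (mkQ _ (s x)) := rfl
    _ = mapQ _ _ g (smul_top_le_comap_smul_top _ g) (factorPow m M _ (t x)) :=
        congrArg _ (LinearMap.congr_fun hs x)
    _ = factorPow m M₂ ((n + c₂).le_add_right c₁) (mkQ _ x) := by
        rw [hcomm]
        exact congrArg _ (LinearMap.congr_fun ht x)
    _ = Submodule.Quotient.mk x := factor_mk _ x

theorem stmt_1_general (R : Type) [CommRing R] [IsNoetherianRing R] [IsLocalRing R]
    (M₁ M M₂ : Type) [AddCommGroup M₁] [Module R M₁] [AddCommGroup M] [Module R M]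
    [AddCommGroup M₂] [Module R M₂]
    [Module.Finite R M] [Module.Finite R M₂]
    (f : M₁ →ₗ[R] M) (g : M →ₗ[R] M₂)
    (hg : Function.Surjective g) (hfg : Function.Exact f g)
    (hiso : Nonempty (M ≃ₗ[R] M₁ × M₂)) :
    ∃ s : M₂ →ₗ[R] M, g ∘ₗ s = LinearMap.id := by
  obtain ⟨e⟩ := hiso
  suffices hid : LinearMap.id ∈ range (g.compRight R (M := M₂)) from hid
  refine mem_of_forall_mem_sup_pow_smul_top (IsLocalRing.maximalIdeal_le_jacobson _) _ fun n ↦ ?_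
  obtain ⟨s, hs⟩ := hfg.exists_comp_sub_id_mem_maximalIdeal_pow_smul_top hg e n
  refine mem_sup.2 ⟨g ∘ₗ s, ⟨s, rfl⟩, LinearMap.id - g ∘ₗ s, ?_, add_sub_cancel _ _⟩
  simpa only [neg_sub] using neg_mem hs

/-- If `0 → M₁ → M → M₂ → 0` is a short exact sequence of finitely generated modules
over a Noetherian local ring and `M ≅ M₁ ⊕ M₂` as abstract `R`-modules, then the
sequence splits. -/
theorem stmt_1 (R : Type) [CommRing R] [IsNoetherianRing R] [IsLocalRing R]
    (M₁ M M₂ : Type) [AddCommGroup M₁] [Module R M₁] [AddCommGroup M] [Module R M]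
    [AddCommGroup M₂] [Module R M₂]
    [Module.Finite R M₁] [Module.Finite R M] [Module.Finite R M₂]
    (f : M₁ →ₗ[R] M) (g : M →ₗ[R] M₂)
    (hf : Function.Injective f) (hg : Function.Surjective g) (hfg : Function.Exact f g)
    (hiso : Nonempty (M ≃ₗ[R] M₁ × M₂)) :
    ∃ s : M₂ →ₗ[R] M, g ∘ₗ s = LinearMap.id :=
  stmt_1_general R M₁ M M₂ f g hg hfg hiso
end Splitting
end

section
/- Let (R, m) be a Noetherian local domain and f ∈ R a nonzero non-unit. Suppose ζ : 0 → R → A → R_f → 0 is a short exact sequence of R-modules such that A decomposes as a direct sum of two nonzero R-modules. Then ζ splits. -/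
/-!
Let `e` be the projection onto one of the two summands. Writing `e (ι 1) = ι r + fⁿ • y` and
applying `e` once more gives `fⁿ ∣ r (1 - r)`, so in the local ring `R` one of `e (ι 1)` and
`(1 - e) (ι 1)` is divisible by every power of `f`; say `e (ι 1)`. Then the summand `B = range e`
is `f`-divisible and, by Krull's intersection theorem, meets `ι R` trivially. So `g` embeds `B`
as a nonzero `f`-divisible submodule of `R_f`, i.e. a nonzero ideal of `R_f`, which contains
some `m ≠ 0` of `R`. Hence `m` maps the other summand `C = range (1 - e)` into `(1 - e) (ι R)`;
as `A` is torsion-free, `C` is finitely generated, and `C = (1 - e) (ι R) + f C` gives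
`C = (1 - e) (ι R)` by Nakayama. This says exactly that `g` maps `B` onto `R_f`, so `g`
restricts to an isomorphism `B ≃ R_f` whose inverse splits the sequence.
-/

open Function

def IsPowDivisible {R M : Type*} [Monoid R] [MulAction R M] (f : R) (x : M) : Prop :=
  ∀ n : ℕ, ∃ y : M, x = f ^ n • y

theorem IsLocalRing.eq_zero_of_forall_pow_dvd {R : Type*} [CommRing R] [IsNoetherianRing R]
    [IsLocalRing R] {f r : R} (hf : ¬IsUnit f) (hr : ∀ n : ℕ, f ^ n ∣ r) : r = 0 := by
  have hspan : Ideal.span {f} ≠ ⊤ := by rwa [Ne, Ideal.span_singleton_eq_top]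
  have hmem : r ∈ ⨅ n : ℕ, Ideal.span {f} ^ n := by
    refine Submodule.mem_iInf _ |>.mpr fun n => ?_
    rw [Ideal.span_singleton_pow, Ideal.mem_span_singleton]
    exact hr n
  simpa [Ideal.iInf_pow_eq_bot_of_isLocalRing _ hspan] using hmem

theorem IsLocalRing.dvd_or_dvd_one_sub_of_dvd_mul_one_sub {R : Type*} [CommRing R]
    [IsLocalRing R] {a r : R} (h : a ∣ r * (1 - r)) : a ∣ r ∨ a ∣ 1 - r := by
  rcases isUnit_or_isUnit_one_sub_self r with hr | hr
  · exact .inr ((hr.dvd_mul_left).mp h)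
  · exact .inl ((hr.dvd_mul_left).mp (mul_comm r _ ▸ h))

theorem IsSMulRegular.of_exact {R M₁ M₂ M₃ : Type*} [CommRing R] [AddCommGroup M₁] [Module R M₁]
    [AddCommGroup M₂] [Module R M₂] [AddCommGroup M₃] [Module R M₃]
    {ι : M₁ →ₗ[R] M₂} {g : M₂ →ₗ[R] M₃} (hι : Injective ι) (hexact : Exact ι g) {r : R}
    (h₁ : IsSMulRegular M₁ r) (h₃ : IsSMulRegular M₃ r) : IsSMulRegular M₂ r := by
  refine isSMulRegular_iff_right_eq_zero_of_smul.mpr fun x hx => ?_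
  obtain ⟨y, rfl⟩ := (hexact x).mp <| h₃.right_eq_zero_of_smul <| by rw [← map_smul, hx, map_zero]
  have hy : r • y = 0 := hι (by rw [map_smul, hx, map_zero])
  rw [h₁.right_eq_zero_of_smul hy, map_zero]

theorem IsIdempotentElem.apply_apply {R M : Type*} [Semiring R] [AddCommMonoid M] [Module R M]
    {e : Module.End R M} (he : IsIdempotentElem e) (x : M) : e (e x) = e x :=
  LinearMap.congr_fun he x

theorem LinearMap.apply_eq_smul_apply_one {R M : Type*} [CommSemiring R] [AddCommMonoid M]
    [Module R M] (ι : R →ₗ[R] M) (r : R) : ι r = r • ι 1 := by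
  rw [← map_smul, smul_eq_mul, mul_one]

theorem LinearMap.exists_comp_eq_id_of_bijective {R M N : Type*} [Semiring R] [AddCommMonoid M]
    [Module R M] [AddCommMonoid N] [Module R N] {g : M →ₗ[R] N} {B : Submodule R M}
    (hB : Bijective (g ∘ₗ B.subtype)) : ∃ s : N →ₗ[R] M, g ∘ₗ s = LinearMap.id :=
  ⟨B.subtype ∘ₗ (LinearEquiv.ofBijective _ hB).symm.toLinearMap,
    LinearMap.ext fun x => (LinearEquiv.ofBijective _ hB).apply_symm_apply x⟩

namespace IsLocalization.Away

variable {R S : Type*} [CommRing R] [CommRing S] [Algebra R S] {f : R} [IsLocalization.Away f S]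

variable (S f) in
theorem bijective_pow_smul (n : ℕ) : Bijective fun x : S => f ^ n • x := by
  have hu := (IsLocalization.Away.algebraMap_isUnit (S := S) f).pow n
  simpa only [Algebra.smul_def, map_pow, hu.unit_spec] using Units.mulLeft_bijective hu.unit

theorem mul_mem_of_isPowDivisible {N : Submodule R S} (hN : ∀ x : N, IsPowDivisible f x)
    (s : S) {x : S} (hx : x ∈ N) : s * x ∈ N := by
  obtain ⟨n, t, hs⟩ := IsLocalization.Away.surj f s
  obtain ⟨y, hy⟩ := hN ⟨x, hx⟩ n
  rw [show x = f ^ n • (y : S) from congr_arg Subtype.val hy, Algebra.smul_def, ← mul_assoc,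
    map_pow, hs, ← Algebra.smul_def]
  exact N.smul_mem t y.2

theorem exists_smul_mem {N : Submodule R S} (hN : ∀ x : N, IsPowDivisible f x) (hN0 : N ≠ ⊥) :
    ∃ m : R, m ≠ 0 ∧ ∀ s : S, m • s ∈ N := by
  obtain ⟨x, hx, hx0⟩ := N.ne_bot_iff.mp hN0
  obtain ⟨n, m, hm⟩ := IsLocalization.Away.surj f x
  refine ⟨m, ?_, fun s => ?_⟩
  · rintro rfl
    rw [map_zero] at hm
    exact hx0 ((((IsLocalization.Away.algebraMap_isUnit f).pow n).mul_left_eq_zero).mp hm)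
  · rw [Algebra.smul_def, ← hm, mul_comm, ← mul_assoc, mul_right_comm]
    exact mul_mem_of_isPowDivisible hN _ hx

theorem isSMulRegular [IsDomain R] (hf : f ≠ 0) {m : R} (hm : m ≠ 0) : IsSMulRegular S m := by
  have := IsLocalization.Away.isDomain S hf
  refine IsSMulRegular.of_map (algebraMap R S) (fun x => algebraMap_smul S m x) ?_
  refine IsSMulRegular.of_ne_zero fun h => hm ?_
  exact IsLocalization.injective S (powers_le_nonZeroDivisors_of_noZeroDivisors hf)
    (h.trans (map_zero _).symm)

end IsLocalization.Away

section Extension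

open IsLocalization.Away LinearMap

variable {R A S : Type*} [CommRing R] [AddCommGroup A] [Module R A] [CommRing S] [Algebra R S]
  {f : R} [IsLocalization.Away f S] {ι : R →ₗ[R] A} {g : A →ₗ[R] S}

variable (f) in
theorem exists_eq_add_pow_smul (hg : Surjective g) (hexact : Exact ι g) (a : A) (n : ℕ) :
    ∃ r y, a = ι r + f ^ n • y := by
  obtain ⟨x, hx : f ^ n • x = g a⟩ := (bijective_pow_smul S f n).surjective (g a)
  obtain ⟨y, rfl⟩ := hg x
  obtain ⟨r, hr⟩ := (hexact (a - f ^ n • y)).mp (by rw [map_sub, map_smul, hx, sub_self])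
  exact ⟨r, y, by rw [hr, sub_add_cancel]⟩

theorem pow_dvd_of_eq_pow_smul (hι : Injective ι) (hexact : Exact ι g) {r : R} {n : ℕ} {y : A}
    (h : ι r = f ^ n • y) : f ^ n ∣ r := by
  have hy : g y = 0 := (bijective_pow_smul S f n).injective <| by
    simp only [smul_zero]
    rw [← map_smul, ← h, hexact.apply_apply_eq_zero]
  obtain ⟨t, rfl⟩ := (hexact y).mp hy
  exact ⟨t, hι (by rw [h, ← map_smul, smul_eq_mul])⟩

variable (f) in
theorem exists_pow_smul_or_exists_pow_smul [IsLocalRing R] (hg : Surjective g) (hι : Injective ι)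
    (hexact : Exact ι g) {e : Module.End R A} (he : IsIdempotentElem e) (n : ℕ) :
    (∃ y, e (ι 1) = f ^ n • y) ∨ ∃ y, (1 - e) (ι 1) = f ^ n • y := by
  obtain ⟨r, y, hry⟩ := exists_eq_add_pow_smul f hg hexact (e (ι 1)) n
  have hre : e (ι 1) = r • e (ι 1) + f ^ n • e y := by
    conv_lhs => rw [← he.apply_apply, hry]
    rw [map_add, map_smul, ι.apply_eq_smul_apply_one r, map_smul]
  rw [ι.apply_eq_smul_apply_one r] at hry
  have hdvd : f ^ n ∣ r * (1 - r) := pow_dvd_of_eq_pow_smul hι hexact (y := r • y + e y - y) <| by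
    rw [ι.apply_eq_smul_apply_one (r * (1 - r))]
    linear_combination (norm := module) hre - (1 - r) • hry
  rcases IsLocalRing.dvd_or_dvd_one_sub_of_dvd_mul_one_sub hdvd with ⟨t, ht⟩ | ⟨t, ht⟩
  · refine .inl ⟨t • ι 1 + y, ?_⟩
    linear_combination (norm := module) hry + ht • ι 1
  · refine .inr ⟨t • ι 1 - y, ?_⟩
    rw [LinearMap.sub_apply, Module.End.one_apply]
    linear_combination (norm := module) ht • ι 1 - hry

variable (f) in
theorem isPowDivisible_or_isPowDivisible [IsLocalRing R] (hg : Surjective g) (hι : Injective ι)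
    (hexact : Exact ι g) {e : Module.End R A} (he : IsIdempotentElem e) :
    IsPowDivisible f (e (ι 1)) ∨ IsPowDivisible f ((1 - e) (ι 1)) := by
  by_contra h
  obtain ⟨⟨n₁, h₁⟩, n₂, h₂⟩ : (∃ n, ∀ y, e (ι 1) ≠ f ^ n • y) ∧
      ∃ n, ∀ y, (1 - e) (ι 1) ≠ f ^ n • y := by
    simpa [IsPowDivisible, not_or] using h
  rcases exists_pow_smul_or_exists_pow_smul f hg hι hexact he (n₁ + n₂) with ⟨y, hy⟩ | ⟨y, hy⟩
  · exact h₁ (f ^ n₂ • y) (by rw [hy, pow_add, mul_smul])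
  · exact h₂ (f ^ n₁ • y) (by rw [hy, add_comm, pow_add, mul_smul])

section Splitting

open Submodule

variable {e : Module.End R A} (he : IsIdempotentElem e)
include he

theorem IsIdempotentElem.apply_mem_map_range_iff (hexact : Exact ι g) (a : A) :
    g a ∈ (range e).map g ↔ (1 - e) a ∈ range ((1 - e) ∘ₗ ι) := by
  have hcompl (x : A) : (1 - e) (e x) = 0 := by
    rw [LinearMap.sub_apply, Module.End.one_apply, he.apply_apply, sub_self]
  constructor
  · rintro ⟨_, ⟨b, rfl⟩, hb⟩
    obtain ⟨r, hr⟩ := (hexact (a - e b)).mp (by rw [map_sub, hb, sub_self])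
    refine ⟨r, ?_⟩
    rw [LinearMap.comp_apply, hr, map_sub, hcompl, sub_zero]
  · rintro ⟨r, hr⟩
    refine ⟨e (a - ι r), ⟨_, rfl⟩, ?_⟩
    have hfix : e (a - ι r) = a - ι r := by
      rw [LinearMap.comp_apply, LinearMap.sub_apply, LinearMap.sub_apply, Module.End.one_apply,
        Module.End.one_apply] at hr
      rw [map_sub]
      linear_combination (norm := module) hr
    rw [hfix, map_sub, hexact.apply_apply_eq_zero, sub_zero]

variable (hg : Surjective g) (hexact : Exact ι g) (hdiv : IsPowDivisible f (e (ι 1)))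
include hg hexact hdiv

theorem IsIdempotentElem.exists_apply_eq_pow_smul_apply (a : A) (n : ℕ) :
    ∃ y, e a = f ^ n • e y := by
  obtain ⟨r, y, rfl⟩ := exists_eq_add_pow_smul f hg hexact a n
  obtain ⟨z, hz⟩ := hdiv n
  have h : e (ι r + f ^ n • y) = f ^ n • (r • z + e y) := by
    rw [map_add, map_smul, ι.apply_eq_smul_apply_one, map_smul, hz, smul_comm, smul_add]
  exact ⟨r • z + e y, by rw [← he.apply_apply, h, map_smul]⟩

theorem IsIdempotentElem.injective_comp_subtype_range [IsNoetherianRing R] [IsLocalRing R]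
    (hf : ¬IsUnit f) (hι : Injective ι) : Injective (g ∘ₗ (range e).subtype) := by
  refine (injective_iff_map_eq_zero _).mpr fun ⟨b, hb⟩ hgb => ?_
  obtain ⟨r, rfl⟩ := (hexact b).mp hgb
  have hr : r = 0 := IsLocalRing.eq_zero_of_forall_pow_dvd hf fun n => by
    obtain ⟨y, hy⟩ := he.exists_apply_eq_pow_smul_apply hg hexact hdiv (ι r) n
    exact pow_dvd_of_eq_pow_smul hι hexact ((he.mem_range_iff.mp hb).symm.trans hy)
  simp [hr]

theorem IsIdempotentElem.exists_smul_mem_map_range [IsNoetherianRing R] [IsLocalRing R]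
    (hf : ¬IsUnit f) (hι : Injective ι) (he0 : e ≠ 0) :
    ∃ m : R, m ≠ 0 ∧ ∀ s : S, m • s ∈ (range e).map g := by
  refine exists_smul_mem (f := f) ?_ ?_
  · rintro ⟨_, _, ⟨a, rfl⟩, rfl⟩ n
    obtain ⟨y, hy⟩ := he.exists_apply_eq_pow_smul_apply hg hexact hdiv a n
    exact ⟨⟨g (e y), mem_map_of_mem ⟨y, rfl⟩⟩, Subtype.ext (by simp [hy])⟩
  · obtain ⟨a, ha⟩ := DFunLike.ne_iff.mp he0
    have hinj := he.injective_comp_subtype_range hg hexact hdiv hf hι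
    refine (Submodule.ne_bot_iff _).mpr ⟨g (e a), mem_map_of_mem ⟨a, rfl⟩, fun h => ha ?_⟩
    exact congr_arg Subtype.val ((injective_iff_map_eq_zero _).mp hinj ⟨e a, a, rfl⟩ h)

theorem IsIdempotentElem.fg_range_one_sub [IsDomain R] [IsNoetherianRing R] [IsLocalRing R]
    (hf0 : f ≠ 0) (hf : ¬IsUnit f) (hι : Injective ι) (he0 : e ≠ 0) :
    (range (1 - e)).FG := by
  obtain ⟨m, hm0, hm⟩ := he.exists_smul_mem_map_range hg hexact hdiv hf hι he0
  -- multiplication by `m` embeds `range (1 - e)` into the cyclic module `range ((1 - e) ∘ₗ ι)`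
  have hreg : IsSMulRegular A m :=
    .of_exact hι hexact (.of_ne_zero hm0) (isSMulRegular (f := f) hf0 hm0)
  refine fg_of_fg_map_injective (lsmul R A m) hreg
    (isNoetherian_submodule.mp (inferInstance : IsNoetherian R (range ((1 - e) ∘ₗ ι))) _ ?_)
  rintro _ ⟨_, ⟨a, rfl⟩, rfl⟩
  have h := (he.apply_mem_map_range_iff hexact (m • (1 - e) a)).mp (by rw [map_smul]; exact hm _)
  rwa [map_smul, he.one_sub.apply_apply] at h

theorem IsIdempotentElem.range_one_sub_le [IsDomain R] [IsNoetherianRing R] [IsLocalRing R]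
    (hf0 : f ≠ 0) (hf : ¬IsUnit f) (hι : Injective ι) (he0 : e ≠ 0) :
    range (1 - e) ≤ range ((1 - e) ∘ₗ ι) := by
  refine le_of_le_smul_of_le_jacobson_bot (I := Ideal.span {f})
    (he.fg_range_one_sub hg hexact hdiv hf0 hf hι he0) ?_ ?_
  · rw [IsLocalRing.jacobson_eq_maximalIdeal ⊥ bot_ne_top, Ideal.span_le,
      Set.singleton_subset_iff]
    exact hf
  · rintro _ ⟨a, rfl⟩
    obtain ⟨r, y, rfl⟩ := exists_eq_add_pow_smul f hg hexact a 1
    rw [pow_one, map_add, map_smul]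
    exact add_mem_sup ⟨r, rfl⟩ (smul_mem_smul (Ideal.mem_span_singleton_self f) ⟨y, rfl⟩)

theorem IsIdempotentElem.exists_comp_eq_id [IsDomain R] [IsNoetherianRing R] [IsLocalRing R]
    (hf0 : f ≠ 0) (hf : ¬IsUnit f) (hι : Injective ι) (he0 : e ≠ 0) :
    ∃ s : S →ₗ[R] A, g ∘ₗ s = LinearMap.id := by
  refine exists_comp_eq_id_of_bijective ⟨he.injective_comp_subtype_range hg hexact hdiv hf hι, ?_⟩
  intro x
  obtain ⟨a, rfl⟩ := hg x
  obtain ⟨_, ⟨b, rfl⟩, hb⟩ := (he.apply_mem_map_range_iff hexact a).mpr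
    (he.range_one_sub_le hg hexact hdiv hf0 hf hι he0 ⟨a, rfl⟩)
  exact ⟨⟨e b, b, rfl⟩, hb⟩

end Splitting

end Extension

theorem Submodule.projection_ne_zero {R M : Type*} [Ring R] [AddCommGroup M] [Module R M]
    {p q : Submodule R M} (hpq : IsCompl p q) (hp : p ≠ ⊥) : p.projection q hpq ≠ 0 :=
  fun h => hp (by rw [← range_projection hpq, h, LinearMap.range_zero])

/-- Let `(R,m)` be a Noetherian local domain and `f` a nonzero non-unit.  If
`ζ : 0 → R → A → R_f → 0` is a short exact sequence of `R`-modules such that `A`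
decomposes as a direct sum of two nonzero submodules, then `ζ` splits. -/
theorem stmt_19 (R : Type) [CommRing R] [IsNoetherianRing R] [IsLocalRing R] [IsDomain R]
    (f : R) (hf0 : f ≠ 0) (hfu : ¬ IsUnit f)
    (A : Type) [AddCommGroup A] [Module R A]
    (ι : R →ₗ[R] A) (g : A →ₗ[R] Localization.Away f)
    (hι : Function.Injective ι) (hg : Function.Surjective g) (hexact : Function.Exact ι g)
    (hdec : ∃ B C : Submodule R A, IsCompl B C ∧ B ≠ ⊥ ∧ C ≠ ⊥) :
    ∃ s : Localization.Away f →ₗ[R] A, g ∘ₗ s = LinearMap.id := by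
  obtain ⟨B, C, hBC, hB, hC⟩ := hdec
  have hCB : C.projection B hBC.symm = 1 - B.projection C hBC :=
    Submodule.projection_eq_id_sub_projection hBC
  rcases isPowDivisible_or_isPowDivisible f hg hι hexact (Submodule.isIdempotentElem_projection hBC)
    with hdiv | hdiv
  · exact (Submodule.isIdempotentElem_projection hBC).exists_comp_eq_id hg hexact hdiv hf0 hfu hι
      (Submodule.projection_ne_zero hBC hB)
  · rw [← hCB] at hdiv
    exact (Submodule.isIdempotentElem_projection hBC.symm).exists_comp_eq_id hg hexact hdiv hf0 hfu hι
      (Submodule.projection_ne_zero hBC.symm hC)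
end
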